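/- From attainability and uniform return to a point to uniform irreducibility: Let (X,d) and (E,d_E) be compact metric spaces, ℓ a Borel probability measure on E with support equal to E, and S : X×E → X a continuous map; let κ(x) be the image of ℓ under ζ ↦ S(x,ζ), with n-step kernel κ^n, and for ζ₀,…,ζ_{n−1} ∈ E write S_n(z; ζ₀,…,ζ_{n−1}) for the iterate S(…S(S(z,ζ₀),ζ₁)…,ζ_{n−1}). Assume: (i) there exist z₀ ∈ X and ζ* ∈ E with S(z₀,ζ*) = z₀; (ii) the set {S_n(z₀; ζ₀,…,ζ_{n−1}) : n ∈ ℕ, ζ₀,…,ζ_{n−1} ∈ E} is dense in X; (iii) for every ε₀ > 0 there exist N₀ ∈ ℕ and p₀ > 0 such that κ^{N₀}(x)(B(z₀,ε₀)) ≥ p₀ for all x ∈ X. Then for every ε > 0 there exist N ∈ ℕ and p > 0 such that κ^N(x)(B(y,ε)) ≥ p for all x, y ∈ X. -/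

import Mathlib

/-!
Fix `ε > 0`. Compactness and density give finitely many attainable points `w` whose
`ε/2`-balls cover `X`. Each `w` is reached from `z₀` along a finite word, and by continuity of
`S` and full support of `ℓ` every point near `z₀` then enters `B(w, ε/2)` along that word with
probability bounded below. Prepending copies of `ζ*`, which fixes `z₀`, makes all these words
equally long, say `M`. So there are `δ, q > 0` with `κ^M(z)(B(y, ε)) ≥ q` whenever
`d(z, z₀) < δ`, and the uniform return to `B(z₀, δ)` in `N₀` steps gives the bound in
`N₀ + M` steps.
-/

open MeasureTheory Filter Topology
open scoped ENNReal NNReal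

noncomputable def kIter {X : Type*} [MeasurableSpace X] (κ : X → Measure X) : ℕ → X → Measure X
  | 0 => fun x => Measure.dirac x
  | n + 1 => fun x => (kIter κ n x).bind κ

open Set Metric

section KernelIterates

variable {X : Type*} [MeasurableSpace X] {κ : X → Measure X}

lemma measurable_kIter (hκ : Measurable κ) : ∀ n, Measurable (kIter κ n)
  | 0 => Measure.measurable_dirac
  | n + 1 => (Measure.measurable_bind' hκ).comp (measurable_kIter hκ n)

lemma kIter_add (hκ : Measurable κ) (m n : ℕ) (x : X) :
    kIter κ (m + n) x = (kIter κ m x).bind (kIter κ n) := by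
  induction n with
  | zero => simp [kIter, Measure.bind_dirac]
  | succ n ih =>
    change (kIter κ (m + n) x).bind κ = _
    rw [ih, Measure.bind_bind (measurable_kIter hκ n).aemeasurable hκ.aemeasurable]
    rfl

lemma kIter_succ_apply (hκ : Measurable κ) (n : ℕ) (x : X) {A : Set X}
    (hA : MeasurableSet A) : kIter κ (n + 1) x A = ∫⁻ y, kIter κ n y A ∂κ x := by
  rw [add_comm, kIter_add hκ, Measure.bind_apply hA (measurable_kIter hκ n).aemeasurable]
  rw [show kIter κ 1 x = κ x from Measure.dirac_bind hκ x]

lemma mul_le_kIter_add (hκ : Measurable κ) {m n : ℕ} {x : X} {A B : Set X}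
    (hA : MeasurableSet A) (hB : MeasurableSet B) {p q : ℝ≥0∞} (hp : p ≤ kIter κ m x B)
    (hq : ∀ z ∈ B, q ≤ kIter κ n z A) : q * p ≤ kIter κ (m + n) x A :=
  calc q * p ≤ q * kIter κ m x B := by gcongr
    _ = ∫⁻ _ in B, q ∂kIter κ m x := by rw [setLIntegral_const]
    _ ≤ ∫⁻ z in B, kIter κ n z A ∂kIter κ m x := setLIntegral_mono' hB hq
    _ ≤ ∫⁻ z, kIter κ n z A ∂kIter κ m x := setLIntegral_le_lintegral _ _
    _ = kIter κ (m + n) x A := by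
      rw [kIter_add hκ, Measure.bind_apply hA (measurable_kIter hκ n).aemeasurable]

end KernelIterates

section RandomMap

variable {X E : Type*} [MeasurableSpace X] [MeasurableSpace E]

noncomputable def randomMapKernel (S : X × E → X) (ℓ : Measure E) (x : X) : Measure X :=
  ℓ.map fun ζ => S (x, ζ)

variable {S : X × E → X} {ℓ : Measure E}

lemma measurable_randomMapKernel [SFinite ℓ] (hS : Measurable S) :
    Measurable (randomMapKernel S ℓ) := by
  refine Measure.measurable_of_measurable_coe _ fun s hs => ?_
  have hpre : ∀ x, randomMapKernel S ℓ x s = ℓ (Prod.mk x ⁻¹' (S ⁻¹' s)) := fun x =>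
    Measure.map_apply (hS.comp measurable_prodMk_left) hs
  simp_rw [hpre]
  exact measurable_measure_prodMk_left (hs.preimage hS)

lemma kIter_randomMapKernel_succ_apply [SFinite ℓ] (hS : Measurable S) (n : ℕ) (x : X)
    {A : Set X} (hA : MeasurableSet A) :
    kIter (randomMapKernel S ℓ) (n + 1) x A =
      ∫⁻ ζ, kIter (randomMapKernel S ℓ) n (S (x, ζ)) A ∂ℓ := by
  have hκ := measurable_randomMapKernel (ℓ := ℓ) hS
  rw [kIter_succ_apply hκ n x hA, randomMapKernel]
  exact lintegral_map ((Measure.measurable_coe hA).comp (measurable_kIter hκ n))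
    (hS.comp measurable_prodMk_left)

end RandomMap

section Hitting

variable {X : Type*} [TopologicalSpace X] [MeasurableSpace X]

def HitsUniformlyNear (κ : X → Measure X) (n : ℕ) (x : X) (𝒰 : Set (Set X)) : Prop :=
  ∃ q > 0, ∀ᶠ z in 𝓝 x, ∀ U ∈ 𝒰, q ≤ kIter κ n z U

variable {κ : X → Measure X} {n : ℕ} {x : X} {𝒰 𝒱 : Set (Set X)}

lemma hitsUniformlyNear_zero {U : Set X} (hU : U ∈ 𝓝 x) : HitsUniformlyNear κ 0 x {U} :=
  ⟨1, one_pos, eventually_of_mem hU fun z hz V hV => by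
    rw [mem_singleton_iff.1 hV]
    exact (Measure.dirac_apply_of_mem hz).ge⟩

lemma HitsUniformlyNear.mono (h : HitsUniformlyNear κ n x 𝒰)
    (h𝒱 : ∀ V ∈ 𝒱, ∃ U ∈ 𝒰, U ⊆ V) : HitsUniformlyNear κ n x 𝒱 := by
  obtain ⟨q, hq, hnear⟩ := h
  refine ⟨q, hq, hnear.mono fun z hz V hV => ?_⟩
  obtain ⟨U, hU, hUV⟩ := h𝒱 V hV
  exact (hz U hU).trans (measure_mono hUV)

lemma HitsUniformlyNear.union (h₁ : HitsUniformlyNear κ n x 𝒰)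
    (h₂ : HitsUniformlyNear κ n x 𝒱) : HitsUniformlyNear κ n x (𝒰 ∪ 𝒱) := by
  obtain ⟨q₁, hq₁, hnear₁⟩ := h₁
  obtain ⟨q₂, hq₂, hnear₂⟩ := h₂
  refine ⟨min q₁ q₂, lt_min hq₁ hq₂, (hnear₁.and hnear₂).mono fun z hz U hU => ?_⟩
  rcases hU with hU | hU
  · exact (min_le_left _ _).trans (hz.1 U hU)
  · exact (min_le_right _ _).trans (hz.2 U hU)

variable {E : Type*} [TopologicalSpace E] [MeasurableSpace E] [OpensMeasurableSpace E]
  {ℓ : Measure E} [SFinite ℓ] [ℓ.IsOpenPosMeasure] {S : X × E → X}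

/-- The noise values near `a` have positive `ℓ`-mass and, by continuity of `S`, carry the points
near `x` close to `S (x, a)`. -/
lemma HitsUniformlyNear.of_step (hS : Continuous S) (hSm : Measurable S)
    (h𝒰 : ∀ U ∈ 𝒰, MeasurableSet U) {a : E}
    (h : HitsUniformlyNear (randomMapKernel S ℓ) n (S (x, a)) 𝒰) :
    HitsUniformlyNear (randomMapKernel S ℓ) (n + 1) x 𝒰 := by
  obtain ⟨q, hq, hnear⟩ := h
  obtain ⟨u, v, hu, hxu, hv, hav, huv⟩ :=
    mem_nhds_prod_iff'.1 (hS.continuousAt.preimage_mem_nhds hnear)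
  refine ⟨q * ℓ v, ENNReal.mul_pos hq.ne' (hv.measure_pos ℓ ⟨a, hav⟩).ne',
    eventually_of_mem (hu.mem_nhds hxu) fun z hz U hU => ?_⟩
  rw [kIter_randomMapKernel_succ_apply hSm n z (h𝒰 U hU)]
  calc q * ℓ v = ∫⁻ _ in v, q ∂ℓ := (setLIntegral_const v q).symm
    _ ≤ ∫⁻ ζ in v, kIter (randomMapKernel S ℓ) n (S (z, ζ)) U ∂ℓ :=
      setLIntegral_mono' hv.measurableSet fun ζ hζ => huv (mk_mem_prod hz hζ) U hU
    _ ≤ _ := setLIntegral_le_lintegral _ _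

lemma HitsUniformlyNear.of_foldl (hS : Continuous S) (hSm : Measurable S)
    (h𝒰 : ∀ U ∈ 𝒰, MeasurableSet U) :
    ∀ (l : List E) {x : X} {n : ℕ},
      HitsUniformlyNear (randomMapKernel S ℓ) n (l.foldl (fun z ζ => S (z, ζ)) x) 𝒰 →
      HitsUniformlyNear (randomMapKernel S ℓ) (n + l.length) x 𝒰
  | [], _, _, h => h
  | _ :: l, _, _, h => (of_foldl hS hSm h𝒰 l h).of_step hS hSm h𝒰

lemma HitsUniformlyNear.mono_steps_of_fixed (hS : Continuous S) (hSm : Measurable S)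
    (h𝒰 : ∀ U ∈ 𝒰, MeasurableSet U) {a : E} (hfix : S (x, a) = x)
    (h : HitsUniformlyNear (randomMapKernel S ℓ) n x 𝒰) {m : ℕ} (hnm : n ≤ m) :
    HitsUniformlyNear (randomMapKernel S ℓ) m x 𝒰 := by
  induction m, hnm using Nat.le_induction with
  | base => exact h
  | succ m _ ih => exact (hfix ▸ ih).of_step hS hSm h𝒰

lemma exists_hitsUniformlyNear_image_of_isCompact (hS : Continuous S) (hSm : Measurable S)
    {a : E} (hfix : S (x, a) = x) {Y : Type*} [TopologicalSpace Y] {K : Set Y}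
    (hK : IsCompact K) {F : Y → Set X} (hF : ∀ y, MeasurableSet (F y))
    (hloc : ∀ y ∈ K, ∃ t ∈ 𝓝[K] y, ∃ n, HitsUniformlyNear (randomMapKernel S ℓ) n x (F '' t)) :
    ∃ n, HitsUniformlyNear (randomMapKernel S ℓ) n x (F '' K) := by
  have hmeas : ∀ t : Set Y, ∀ U ∈ F '' t, MeasurableSet U := by
    rintro t _ ⟨y, -, rfl⟩
    exact hF y
  refine hK.induction_on ⟨0, 1, one_pos, by simp⟩ ?_ ?_ hloc
  · rintro s t hst ⟨n, h⟩
    exact ⟨n, h.mono fun V hV => ⟨V, image_mono hst hV, subset_rfl⟩⟩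
  · rintro s t ⟨m, hs⟩ ⟨n, ht⟩
    refine ⟨max m n, image_union F s t ▸ ?_⟩
    exact (hs.mono_steps_of_fixed hS hSm (hmeas s) hfix (le_max_left m n)).union
      (ht.mono_steps_of_fixed hS hSm (hmeas t) hfix (le_max_right m n))

end Hitting

theorem uniform_irreducibility_of_attainability_general
    {X E : Type*} [MetricSpace X] [CompactSpace X] [MeasurableSpace X] [BorelSpace X]
    [MetricSpace E] [MeasurableSpace E] [BorelSpace E]
    (ℓ : Measure E) [IsProbabilityMeasure ℓ]
    (hsupp : ∀ U : Set E, IsOpen U → U.Nonempty → 0 < ℓ U)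
    (S : X × E → X) (hS : Continuous S)
    (z₀ : X) (ζstar : E) (hfix : S (z₀, ζstar) = z₀)
    (hdense : Dense {y : X | ∃ l : List E, y = l.foldl (fun z ζ => S (z, ζ)) z₀})
    (hreturn : ∀ ε₀ : ℝ, 0 < ε₀ → ∃ (N₀ : ℕ) (p₀ : ℝ≥0∞), 0 < p₀ ∧
      ∀ x : X,
        p₀ ≤ kIter (fun z => Measure.map (fun ζ => S (z, ζ)) ℓ) N₀ x (Metric.ball z₀ ε₀)) :
    ∀ ε : ℝ, 0 < ε → ∃ (N : ℕ) (p : ℝ≥0∞), 0 < p ∧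
      ∀ x y : X,
        p ≤ kIter (fun z => Measure.map (fun ζ => S (z, ζ)) ℓ) N x (Metric.ball y ε) := by
  have : ℓ.IsOpenPosMeasure := ⟨fun U hU hne => (hsupp U hU hne).ne'⟩
  intro ε hε
  obtain ⟨M, q, hq, hnear⟩ : ∃ M, HitsUniformlyNear (randomMapKernel S ℓ) M z₀
      ((ball · ε) '' univ) := by
    refine exists_hitsUniformlyNear_image_of_isCompact hS hS.measurable hfix isCompact_univ
      (fun _ => measurableSet_ball) fun y _ => ?_
    obtain ⟨_, hwy, l, rfl⟩ := Metric.dense_iff.1 hdense y (ε / 2) (half_pos hε)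
    refine ⟨_, mem_nhdsWithin_of_mem_nhds (isOpen_ball.mem_nhds (mem_ball_comm.1 hwy)),
      0 + l.length, ?_⟩
    refine (HitsUniformlyNear.of_foldl hS hS.measurable (by simpa using measurableSet_ball) l
      (hitsUniformlyNear_zero (ball_mem_nhds _ (half_pos hε)))).mono ?_
    rintro _ ⟨y', hy', rfl⟩
    exact ⟨_, rfl, ball_subset_ball' (by linarith [mem_ball'.1 hy'])⟩
  obtain ⟨δ, hδ, hball⟩ := Metric.eventually_nhds_iff_ball.1 hnear
  obtain ⟨N₀, p₀, hp₀, hret⟩ := hreturn δ hδ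
  exact ⟨N₀ + M, q * p₀, ENNReal.mul_pos hq.ne' hp₀.ne', fun x y =>
    mul_le_kIter_add (measurable_randomMapKernel hS.measurable) measurableSet_ball
      measurableSet_ball (hret x) fun z hz => hball z hz _ (mem_image_of_mem _ (mem_univ y))⟩

/-- From attainability and uniform return to a point to uniform
irreducibility: if the noise has full support, some point `z₀` is fixed by some noise value,
the set attainable from `z₀` is dense, and the chain returns to any neighbourhood of `z₀`
with uniformly positive probability, then the chain is uniformly irreducible. -/
theorem uniform_irreducibility_of_attainability
    {X E : Type*} [MetricSpace X] [CompactSpace X] [MeasurableSpace X] [BorelSpace X]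
    [MetricSpace E] [CompactSpace E] [MeasurableSpace E] [BorelSpace E]
    (ℓ : Measure E) [IsProbabilityMeasure ℓ]
    (hsupp : ∀ U : Set E, IsOpen U → U.Nonempty → 0 < ℓ U)
    (S : X × E → X) (hS : Continuous S)
    (z₀ : X) (ζstar : E) (hfix : S (z₀, ζstar) = z₀)
    (hdense : Dense {y : X | ∃ l : List E, y = l.foldl (fun z ζ => S (z, ζ)) z₀})
    (hreturn : ∀ ε₀ : ℝ, 0 < ε₀ → ∃ (N₀ : ℕ) (p₀ : ℝ≥0∞), 0 < p₀ ∧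
      ∀ x : X,
        p₀ ≤ kIter (fun z => Measure.map (fun ζ => S (z, ζ)) ℓ) N₀ x (Metric.ball z₀ ε₀)) :
    ∀ ε : ℝ, 0 < ε → ∃ (N : ℕ) (p : ℝ≥0∞), 0 < p ∧
      ∀ x y : X,
        p ≤ kIter (fun z => Measure.map (fun ζ => S (z, ζ)) ℓ) N x (Metric.ball y ε) :=
  uniform_irreducibility_of_attainability_general ℓ hsupp S hS z₀ ζstar hfix hdense hreturn
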